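/- Define ψ₀ : ℝ → ℂ² by ψ₀(x) = ( i√(k/(2β))·x·exp(−√(βk/2)·x²/2), exp(−√(βk/2)·x²/2) ), and for each natural number n let ψₙ = (b†)^[n] ψ₀ be the n-fold iterate of the raising operator b† applied to ψ₀. Then for every n ∈ ℕ, ψₙ is a γ₊-eigenstate of the harmonic Lévy-Leblond Hamiltonian with γ₊-eigenvalue ω(n + 1/2): (H_LL ψₙ)(x) = ω(n + 1/2) γ₊ ψₙ(x) for all x ∈ ℝ. (This is the constructive half of the paper's theorem that the γ₊-eigenvalues of the harmonic Lévy-Leblond Hamiltonian are ω(n + 1/2) with eigenstates (b†)ⁿ|0⟩.) -/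

import Mathlib

/-!
The Hamiltonian and the raising operator satisfy the ladder relation
`H_LL b† = b† H_LL + ω γ₊ b†` on twice differentiable states, and `b†` commutes with `γ₊`
because `γ₊² = 0`. Hence `b†` maps a `γ₊`-eigenstate with eigenvalue `μ` to one with eigenvalue
`μ + ω`, and induction from the vacuum, whose eigenvalue `ω/2` is a direct computation, gives
the claim. Both computations become polynomial identities once the constants are written in
terms of `c = √(k/(2β))`: `√(βk/2) = βc`, `ω = 2c` and `k = 2βc²`.
-/

open Matrix

noncomputable section

/-- The gamma matrix `γ¹ = [[1,0],[0,−1]]`. -/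
def γ1 : Matrix (Fin 2) (Fin 2) ℂ := !![1, 0; 0, -1]

/-- The gamma matrix `γ₊ = [[0,1],[0,0]]`. -/
def γp : Matrix (Fin 2) (Fin 2) ℂ := !![0, 1; 0, 0]

/-- The gamma matrix `γ₋ = [[0,0],[1,0]]`. -/
def γm : Matrix (Fin 2) (Fin 2) ℂ := !![0, 0; 1, 0]

/-- The harmonic Lévy-Leblond Hamiltonian:
`(H_LL ψ)(x) = β γ₋ ψ(x) − i γ¹ ψ′(x) + (k/2) x² γ₊ ψ(x)`. -/
def HLL (β k : ℝ) (ψ : ℝ → (Fin 2 → ℂ)) : ℝ → (Fin 2 → ℂ) :=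
  fun x => (β : ℂ) • γm.mulVec (ψ x) - Complex.I • γ1.mulVec (deriv ψ x)
    + ((k / 2 * x ^ 2 : ℝ) : ℂ) • γp.mulVec (ψ x)

/-- The lowering operator:
`(bψ)(x) = √(βk/2)·x·ψ(x) + ψ′(x) − i√(k/(2β)) γ₊ ψ(x)`. -/
def lower (β k : ℝ) (ψ : ℝ → (Fin 2 → ℂ)) : ℝ → (Fin 2 → ℂ) :=
  fun x => ((Real.sqrt (β * k / 2) * x : ℝ) : ℂ) • ψ x + deriv ψ x
    - (Complex.I * ((Real.sqrt (k / (2 * β)) : ℝ) : ℂ)) • γp.mulVec (ψ x)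

/-- The raising operator:
`(b†ψ)(x) = √(βk/2)·x·ψ(x) − ψ′(x) − i√(k/(2β)) γ₊ ψ(x)`. -/
def raise (β k : ℝ) (ψ : ℝ → (Fin 2 → ℂ)) : ℝ → (Fin 2 → ℂ) :=
  fun x => ((Real.sqrt (β * k / 2) * x : ℝ) : ℂ) • ψ x - deriv ψ x
    - (Complex.I * ((Real.sqrt (k / (2 * β)) : ℝ) : ℂ)) • γp.mulVec (ψ x)

/-- The vacuum state `ψ₀(x) = ( i√(k/(2β))·x·exp(−√(βk/2)·x²/2), exp(−√(βk/2)·x²/2) )`. -/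
def vacuum (β k : ℝ) : ℝ → (Fin 2 → ℂ) :=
  fun x => ![Complex.I * ((Real.sqrt (k / (2 * β)) : ℝ) : ℂ) * (x : ℂ)
      * Complex.exp (-(((Real.sqrt (β * k / 2) : ℝ) : ℂ)) * (x : ℂ) ^ 2 / 2),
    Complex.exp (-(((Real.sqrt (β * k / 2) : ℝ) : ℂ)) * (x : ℂ) ^ 2 / 2)]

open scoped ContDiff

section Constants

variable {β k : ℝ}

theorem mul_sqrt_div_two_mul (hβ : 0 ≤ β) : β * √(k / (2 * β)) = √(β * k / 2) := by
  rw [← Real.sqrt_sq hβ, ← Real.sqrt_mul (sq_nonneg β), Real.sqrt_sq hβ]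
  rcases hβ.eq_or_lt with rfl | hβ
  · simp
  · congr 1; field_simp

theorem sqrt_two_mul_div (β k : ℝ) : √(2 * k / β) = 2 * √(k / (2 * β)) := by
  rw [show 2 * k / β = 2 ^ 2 * (k / (2 * β)) by ring, Real.sqrt_mul (by positivity),
    Real.sqrt_sq zero_le_two]

theorem two_mul_mul_sqrt_div_two_mul_sq (hβ : 0 < β) (hk : 0 ≤ k) :
    2 * β * √(k / (2 * β)) ^ 2 = k := by
  rw [Real.sq_sqrt (by positivity)]
  field_simp

end Constants

theorem γ1_mulVec (v : Fin 2 → ℂ) : γ1 *ᵥ v = ![v 0, -v 1] := by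
  ext i; fin_cases i <;> simp [γ1, Matrix.mulVec, dotProduct]

theorem γp_mulVec (v : Fin 2 → ℂ) : γp *ᵥ v = ![v 1, 0] := by
  ext i; fin_cases i <;> simp [γp, Matrix.mulVec, dotProduct]

theorem γm_mulVec (v : Fin 2 → ℂ) : γm *ᵥ v = ![0, v 0] := by
  ext i; fin_cases i <;> simp [γm, Matrix.mulVec, dotProduct]

theorem γp_mul_self : γp * γp = 0 := by
  ext i j; fin_cases i <;> fin_cases j <;> simp [γp]

section MulVec

variable {m n : Type*} [Fintype m] [Fintype n] (M : Matrix m n ℂ) {ψ : ℝ → n → ℂ}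

theorem HasDerivAt.const_mulVec {x : ℝ} {v : n → ℂ} (h : HasDerivAt ψ v x) :
    HasDerivAt (fun y => M *ᵥ ψ y) (M *ᵥ v) x :=
  ((M.mulVecLin.toContinuousLinearMap.restrictScalars ℝ).hasFDerivAt).comp_hasDerivAt x h

@[fun_prop]
theorem ContDiff.const_mulVec {N : WithTop ℕ∞} (h : ContDiff ℝ N ψ) :
    ContDiff ℝ N (fun y => M *ᵥ ψ y) :=
  (M.mulVecLin.toContinuousLinearMap.restrictScalars ℝ).contDiff.comp h

end MulVec

@[fun_prop]
theorem contDiff_ofReal {N : WithTop ℕ∞} : ContDiff ℝ N ((↑) : ℝ → ℂ) :=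
  Complex.ofRealCLM.contDiff

theorem contDiff_raise {ψ : ℝ → Fin 2 → ℂ} (β k : ℝ) (h : ContDiff ℝ ∞ ψ) :
    ContDiff ℝ ∞ (raise β k ψ) := by
  have := (contDiff_infty_iff_deriv.mp h).2
  unfold raise
  fun_prop

theorem contDiff_vacuum (β k : ℝ) : ContDiff ℝ ∞ (vacuum β k) := by
  refine contDiff_pi.2 fun i => ?_
  fin_cases i <;>
    simp only [vacuum, Fin.zero_eta, Fin.mk_one, Fin.isValue, Matrix.cons_val_zero,
      Matrix.cons_val_one, Matrix.cons_val_fin_one] <;>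
    fun_prop

section Derivatives

variable (β k : ℝ) {ψ : ℝ → Fin 2 → ℂ} {x : ℝ}

theorem deriv_raise (h₁ : DifferentiableAt ℝ ψ x) (h₂ : DifferentiableAt ℝ (deriv ψ) x) :
    deriv (raise β k ψ) x
      = ((√(β * k / 2) * x : ℝ) : ℂ) • deriv ψ x + ((√(β * k / 2) : ℝ) : ℂ) • ψ x
        - deriv (deriv ψ) x - (Complex.I * ((√(k / (2 * β)) : ℝ) : ℂ)) • γp *ᵥ deriv ψ x := by
  have hscalar : HasDerivAt (fun y : ℝ => ((√(β * k / 2) * y : ℝ) : ℂ)) (√(β * k / 2) : ℝ) x := by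
    simpa using ((hasDerivAt_id x).const_mul (√(β * k / 2))).ofReal_comp
  exact (((hscalar.smul h₁.hasDerivAt).sub h₂.hasDerivAt).sub
    ((h₁.hasDerivAt.const_mulVec γp).const_smul (Complex.I * ((√(k / (2 * β)) : ℝ) : ℂ)))).deriv

theorem deriv_HLL (h₁ : DifferentiableAt ℝ ψ x) (h₂ : DifferentiableAt ℝ (deriv ψ) x) :
    deriv (HLL β k ψ) x
      = (β : ℂ) • γm *ᵥ deriv ψ x - Complex.I • γ1 *ᵥ deriv (deriv ψ) x
        + (((k / 2 * x ^ 2 : ℝ) : ℂ) • γp *ᵥ deriv ψ x + ((k * x : ℝ) : ℂ) • γp *ᵥ ψ x) := by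
  have hscalar : HasDerivAt (fun y : ℝ => ((k / 2 * y ^ 2 : ℝ) : ℂ)) ((k * x : ℝ) : ℂ) x := by
    convert ((hasDerivAt_pow 2 x).const_mul (k / 2)).ofReal_comp using 2
    push_cast; ring
  exact ((((h₁.hasDerivAt.const_mulVec γm).const_smul (β : ℂ)).sub
    ((h₂.hasDerivAt.const_mulVec γ1).const_smul Complex.I)).add
    (hscalar.smul (h₁.hasDerivAt.const_mulVec γp))).deriv

theorem raise_smul_γp_mulVec (h : DifferentiableAt ℝ ψ x) (c : ℂ) :
    raise β k (fun y => c • γp *ᵥ ψ y) x = c • γp *ᵥ raise β k ψ x := by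
  have hderiv : deriv (fun y => c • γp *ᵥ ψ y) x = c • γp *ᵥ deriv ψ x :=
    ((h.hasDerivAt.const_mulVec γp).const_smul c).deriv
  simp only [raise]
  rw [hderiv]
  simp only [Matrix.mulVec_sub, Matrix.mulVec_smul, Matrix.mulVec_mulVec, γp_mul_self,
    Matrix.zero_mulVec, smul_zero, sub_zero]
  module

end Derivatives

theorem HLL_raise_eq_raise_HLL_add {β k : ℝ} (hβ : 0 < β) (hk : 0 ≤ k) {ψ : ℝ → Fin 2 → ℂ}
    {x : ℝ} (h₁ : DifferentiableAt ℝ ψ x) (h₂ : DifferentiableAt ℝ (deriv ψ) x) :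
    HLL β k (raise β k ψ) x
      = raise β k (HLL β k ψ) x + ((√(2 * k / β) : ℝ) : ℂ) • γp *ᵥ raise β k ψ x := by
  have e₁ := deriv_raise β k h₁ h₂
  have e₂ := deriv_HLL β k h₁ h₂
  simp only [HLL, raise] at e₁ e₂ ⊢
  rw [e₁, e₂, ← mul_sqrt_div_two_mul hβ.le, sqrt_two_mul_div]
  have hkc : (k : ℂ) = 2 * β * (√(k / (2 * β)) : ℂ) ^ 2 := by
    exact_mod_cast (two_mul_mul_sqrt_div_two_mul_sq hβ hk).symm
  set c := √(k / (2 * β))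
  simp only [γ1_mulVec, γp_mulVec, γm_mulVec]
  ext i
  fin_cases i
  · simp only [Fin.zero_eta, Fin.isValue, Pi.add_apply, Pi.sub_apply, Pi.smul_apply, smul_eq_mul,
      Matrix.cons_val_zero, Matrix.cons_val_one, Matrix.cons_val_fin_one]
    push_cast [hkc]
    linear_combination (2 * (c : ℂ) * deriv ψ x 1) * Complex.I_sq
  · simp only [Fin.mk_one, Fin.isValue, Pi.add_apply, Pi.sub_apply, Pi.smul_apply, smul_eq_mul,
      Matrix.cons_val_zero, Matrix.cons_val_one, Matrix.cons_val_fin_one]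
    push_cast
    ring

theorem HLL_raise_eq_smul_of_HLL_eq_smul {β k : ℝ} (hβ : 0 < β) (hk : 0 ≤ k)
    {ψ : ℝ → Fin 2 → ℂ} {μ : ℂ} (hψ : ∀ y, HLL β k ψ y = μ • γp *ᵥ ψ y) {x : ℝ}
    (h₁ : DifferentiableAt ℝ ψ x) (h₂ : DifferentiableAt ℝ (deriv ψ) x) :
    HLL β k (raise β k ψ) x = (μ + ((√(2 * k / β) : ℝ) : ℂ)) • γp *ᵥ raise β k ψ x := by
  rw [HLL_raise_eq_raise_HLL_add hβ hk h₁ h₂, funext hψ, raise_smul_γp_mulVec β k h₁, add_smul]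

theorem hasDerivAt_cexp_neg_mul_sq_div_two (a : ℂ) (x : ℝ) :
    HasDerivAt (fun y : ℝ => Complex.exp (-a * (y : ℂ) ^ 2 / 2))
      (-a * x * Complex.exp (-a * (x : ℂ) ^ 2 / 2)) x := by
  have hsq : HasDerivAt (fun y : ℝ => (y : ℂ) ^ 2) (2 * x) x := by
    simpa using (hasDerivAt_pow 2 (x : ℂ)).comp_ofReal
  convert ((hsq.const_mul (-a)).div_const 2).cexp using 1
  ring

theorem hasDerivAt_vacuum (β k x : ℝ) :
    HasDerivAt (vacuum β k)
      (Complex.exp (-(√(β * k / 2) : ℂ) * (x : ℂ) ^ 2 / 2) •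
        ![Complex.I * (√(k / (2 * β)) : ℂ) * (1 - (√(β * k / 2) : ℂ) * x ^ 2),
          -(√(β * k / 2) : ℂ) * x]) x := by
  have hE := hasDerivAt_cexp_neg_mul_sq_div_two (√(β * k / 2) : ℂ) x
  have hx : HasDerivAt (fun y : ℝ => (y : ℂ)) 1 x := (hasDerivAt_id (x : ℂ)).comp_ofReal
  refine hasDerivAt_pi.2 fun i => ?_
  fin_cases i
  · exact ((hx.const_mul (Complex.I * (√(k / (2 * β)) : ℂ))).mul hE).congr_deriv
      (by simp only [Fin.zero_eta, Pi.smul_apply, Matrix.cons_val_zero, smul_eq_mul]; ring)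
  · exact hE.congr_deriv
      (by simp only [Fin.mk_one, Pi.smul_apply, Matrix.cons_val_one, Matrix.cons_val_fin_one,
        smul_eq_mul]; ring)

theorem HLL_vacuum {β k : ℝ} (hβ : 0 < β) (hk : 0 ≤ k) (x : ℝ) :
    HLL β k (vacuum β k) x
      = ((√(2 * k / β) * (1 / 2) : ℝ) : ℂ) • γp *ᵥ vacuum β k x := by
  simp only [HLL, (hasDerivAt_vacuum β k x).deriv, vacuum, ← mul_sqrt_div_two_mul hβ.le,
    sqrt_two_mul_div, γ1_mulVec, γp_mulVec, γm_mulVec]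
  have hkc : (k : ℂ) = 2 * β * (√(k / (2 * β)) : ℂ) ^ 2 := by
    exact_mod_cast (two_mul_mul_sqrt_div_two_mul_sq hβ hk).symm
  set c := √(k / (2 * β))
  ext i
  fin_cases i
  · simp only [Fin.zero_eta, Fin.isValue, Pi.add_apply, Pi.sub_apply, Pi.smul_apply, smul_eq_mul,
      Matrix.cons_val_zero, Matrix.cons_val_one, Matrix.cons_val_fin_one]
    push_cast [hkc]
    linear_combination
      (-(c : ℂ) * (1 - β * c * x ^ 2) * Complex.exp (-(β * c) * x ^ 2 / 2)) * Complex.I_sq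
  · simp only [Fin.mk_one, Fin.isValue, Pi.add_apply, Pi.sub_apply, Pi.smul_apply, smul_eq_mul,
      Matrix.cons_val_zero, Matrix.cons_val_one, Matrix.cons_val_fin_one]
    push_cast
    ring

theorem contDiff_iterate_raise (β k : ℝ) (n : ℕ) :
    ContDiff ℝ ∞ ((raise β k)^[n] (vacuum β k)) := by
  induction n with
  | zero => exact contDiff_vacuum β k
  | succ n ih => exact Function.iterate_succ_apply' (raise β k) n _ ▸ contDiff_raise β k ih

/-- For every `n ∈ ℕ`, the state `ψₙ = (b†)^[n] ψ₀` is a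
`γ₊`-eigenstate of the harmonic Lévy-Leblond Hamiltonian with `γ₊`-eigenvalue
`ω(n + 1/2)`, where `ω = √(2k/β)`. -/
theorem excited_states (β k : ℝ) (hβ : 0 < β) (hk : 0 < k) :
    ∀ n : ℕ, ∀ x : ℝ,
      HLL β k ((raise β k)^[n] (vacuum β k)) x
        = ((Real.sqrt (2 * k / β) * (n + 1 / 2) : ℝ) : ℂ)
            • γp.mulVec ((raise β k)^[n] (vacuum β k) x) := by
  intro n
  induction n with
  | zero => simpa using HLL_vacuum hβ hk.le
  | succ n ih =>
    intro x
    obtain ⟨h₁, h₂⟩ := contDiff_infty_iff_deriv.mp (contDiff_iterate_raise β k n)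
    rw [Function.iterate_succ_apply',
      HLL_raise_eq_smul_of_HLL_eq_smul hβ hk.le ih (h₁ x) (h₂.differentiable (by simp) x)]
    congr 1
    push_cast
    ring

end
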